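/- arXiv:2211.15819 — 3 statements merged into one kernel-verified Lean document; each statement's English description precedes it below -/
import Mathlib

section
/- Every D-degenerate graph F with D ≥ 1 satisfies m₂(F) ≤ D, and if D ≥ 3 then the inequality is strict, i.e. m₂(F) < D. -/
open scoped Classical

/-- The 2-density `d₂` as a function of the number of vertices `v` and edges `e`:
`(e-1)/(v-2)` when `e ≥ 1` and `v ≥ 3`, and `1/2` otherwise (the conventions for `K₂`
and edgeless graphs). -/
noncomputable def d2val (v e : ℕ) : ℚ :=
  if 1 ≤ e ∧ 3 ≤ v then ((e : ℚ) - 1) / ((v : ℚ) - 2) else 1 / 2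

/-- `m₂(H) ≤ x`: every subgraph `H'` of `H`, with vertex set a finite set `s` containing all
endpoints of its edges, has 2-density at most `x`. -/
def m2LE {V : Type*} (H : SimpleGraph V) (x : ℚ) : Prop :=
  ∀ (s : Finset V) (H' : SimpleGraph V), H' ≤ H →
    (∀ ⦃a b⦄, H'.Adj a b → a ∈ s ∧ b ∈ s) →
    d2val s.card H'.edgeSet.ncard ≤ x

/-- `m₂(H) < x`: every subgraph of `H` has 2-density strictly less than `x`. -/
def m2LT {V : Type*} (H : SimpleGraph V) (x : ℚ) : Prop :=
  ∀ (s : Finset V) (H' : SimpleGraph V), H' ≤ H →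
    (∀ ⦃a b⦄, H'.Adj a b → a ∈ s ∧ b ∈ s) →
    d2val s.card H'.edgeSet.ncard < x

/-- `H` is `D`-degenerate: every nonempty (induced) subgraph has a vertex of degree at
most `D`. -/
def Degenerate {V : Type*} (D : ℕ) (H : SimpleGraph V) : Prop :=
  ∀ s : Finset V, s.Nonempty → ∃ a ∈ s, (H.neighborSet a ∩ ↑s).ncard ≤ D

/-!
Peel off vertices one at a time, each of degree at most `D` among those that remain: when
`i` others remain, the peeled vertex takes at most `min D i` edges with it. So a `D`-degenerate
graph on `v ≥ 3` vertices has at most `min D 1 + min D 2 + D (v - 3)` edges, which is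
`≤ D (v - 2) + 1` for `D ≥ 1` and `≤ D (v - 2)` once `D ≥ 3`; these are exactly
`(e - 1)/(v - 2) ≤ D` and `(e - 1)/(v - 2) < D`.
-/

theorem sum_range_min_add_le (D : ℕ) {n : ℕ} (hn : 3 ≤ n) :
    ∑ i ∈ Finset.range n, min D i + 3 * D ≤ D * n + min D 1 + min D 2 := by
  induction n, hn using Nat.le_induction with
  | base => simp only [Finset.sum_range_succ, Finset.sum_range_zero]; omega
  | succ n _ ih =>
    rw [Finset.sum_range_succ, mul_add_one]
    have := min_le_left D n
    omega

namespace SimpleGraph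

variable {V : Type*} {G : SimpleGraph V} {s : Finset V}

theorem edgeSet_finite_of_adj_mem (hs : ∀ ⦃a b⦄, G.Adj a b → a ∈ s ∧ b ∈ s) :
    G.edgeSet.Finite :=
  (s.sym2 : Set (Sym2 V)).toFinite.subset fun e he ↦ by
    induction e using Sym2.ind with
    | _ a b => exact Finset.mk_mem_sym2_iff.mpr ⟨(hs he).1, (hs he).2⟩

theorem ncard_incidenceSet (G : SimpleGraph V) (a : V) :
    (G.incidenceSet a).ncard = (G.neighborSet a).ncard :=
  Nat.card_congr (G.incidenceSetEquivNeighborSet a)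

theorem ncard_edgeSet_eq_deleteIncidenceSet_add (hG : G.edgeSet.Finite) (a : V) :
    G.edgeSet.ncard = (G.deleteIncidenceSet a).edgeSet.ncard + (G.neighborSet a).ncard := by
  rw [edgeSet_deleteIncidenceSet, ← ncard_incidenceSet,
    Set.ncard_sdiff_add_ncard_of_subset (G.incidenceSet_subset a) hG]

end SimpleGraph

namespace Degenerate

open SimpleGraph

variable {V : Type*} {D : ℕ} {G H : SimpleGraph V} {s : Finset V}

theorem mono (hH : Degenerate D H) (hGH : G ≤ H) : Degenerate D G := fun s hs ↦ by
  obtain ⟨a, has, ha⟩ := hH s hs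
  exact ⟨a, has, (Set.ncard_le_ncard (Set.inter_subset_inter_left _ fun _ h ↦ hGH h)
    (s.finite_toSet.inter_of_right _)).trans ha⟩

theorem ncard_edgeSet_le_sum_min (hG : Degenerate D G)
    (hs : ∀ ⦃a b⦄, G.Adj a b → a ∈ s ∧ b ∈ s) :
    G.edgeSet.ncard ≤ ∑ i ∈ Finset.range s.card, min D i := by
  induction s using Finset.strongInduction generalizing G with
  | H s ih =>
  rcases s.eq_empty_or_nonempty with rfl | hne
  · obtain rfl : G = ⊥ := eq_bot_iff.mpr fun a _ h ↦ absurd (hs h).1 (Finset.notMem_empty a)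
    simp
  obtain ⟨a, has, ha⟩ := hG s hne
  have hnbr : G.neighborSet a ⊆ ↑(s.erase a) := fun b hab ↦
    Finset.mem_erase.mpr ⟨(G.ne_of_adj hab).symm, (hs hab).2⟩
  have hdeg : (G.neighborSet a).ncard ≤ min D (s.card - 1) := by
    refine le_min ?_ ?_
    · rwa [Set.inter_eq_left.mpr (hnbr.trans (s.erase_subset a))] at ha
    · exact (Set.ncard_le_ncard hnbr).trans_eq
        (by rw [Set.ncard_coe_finset, Finset.card_erase_of_mem has])
  have hrest : (G.deleteIncidenceSet a).edgeSet.ncard ≤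
      ∑ i ∈ Finset.range (s.erase a).card, min D i :=
    ih _ (s.erase_ssubset has) (hG.mono (G.deleteIncidenceSet_le a)) fun b c hbc ↦ by
      obtain ⟨hbc, hb, hc⟩ := deleteIncidenceSet_adj.mp hbc
      exact ⟨Finset.mem_erase.mpr ⟨hb, (hs hbc).1⟩, Finset.mem_erase.mpr ⟨hc, (hs hbc).2⟩⟩
  rw [Finset.card_erase_of_mem has] at hrest
  obtain ⟨n, hn⟩ := Nat.exists_eq_add_one.mpr (Finset.card_pos.mpr hne)
  rw [hn, Nat.add_sub_cancel] at hrest hdeg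
  rw [ncard_edgeSet_eq_deleteIncidenceSet_add (edgeSet_finite_of_adj_mem hs), hn,
    Finset.sum_range_succ]
  exact add_le_add hrest hdeg

theorem ncard_edgeSet_add_le (hG : Degenerate D G)
    (hs : ∀ ⦃a b⦄, G.Adj a b → a ∈ s ∧ b ∈ s) (h3 : 3 ≤ s.card) :
    G.edgeSet.ncard + 3 * D ≤ D * s.card + min D 1 + min D 2 :=
  (Nat.add_le_add_right (hG.ncard_edgeSet_le_sum_min hs) _).trans (sum_range_min_add_le D h3)

end Degenerate

theorem d2val_le_of_add_le {v e x : ℕ} (hx : 1 ≤ x) (h : 3 ≤ v → e + 2 * x ≤ x * v + 1) :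
    d2val v e ≤ x := by
  unfold d2val
  split_ifs with hve
  · have hv : (3 : ℚ) ≤ v := by exact_mod_cast hve.2
    have he : (e : ℚ) + 2 * x ≤ x * v + 1 := by exact_mod_cast h hve.2
    rw [div_le_iff₀ (by linarith)]
    linarith
  · have : (1 : ℚ) ≤ x := by exact_mod_cast hx
    linarith

theorem d2val_lt_of_add_le {v e x : ℕ} (hx : 1 ≤ x) (h : 3 ≤ v → e + 2 * x ≤ x * v) :
    d2val v e < x := by
  unfold d2val
  split_ifs with hve
  · have hv : (3 : ℚ) ≤ v := by exact_mod_cast hve.2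
    have he : (e : ℚ) + 2 * x ≤ x * v := by exact_mod_cast h hve.2
    rw [div_lt_iff₀ (by linarith)]
    linarith
  · have : (1 : ℚ) ≤ x := by exact_mod_cast hx
    linarith

theorem m2_of_degenerate_general {V : Type*} (D : ℕ) (hD : 1 ≤ D)
    (F : SimpleGraph V) (hdeg : Degenerate D F) :
    m2LE F D ∧ (3 ≤ D → m2LT F D) := by
  refine ⟨fun s H hHF hs ↦ d2val_le_of_add_le hD fun h3 ↦ ?_,
    fun hD3 s H hHF hs ↦ d2val_lt_of_add_le hD fun h3 ↦ ?_⟩ <;>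
  · have := (hdeg.mono hHF).ncard_edgeSet_add_le hs h3
    omega

/-- A `D`-degenerate graph `F` with `D ≥ 1` satisfies `m₂(F) ≤ D`; if moreover `D ≥ 3`
then `m₂(F) < D`. -/
theorem m2_of_degenerate {V : Type*} [Fintype V] (D : ℕ) (hD : 1 ≤ D)
    (F : SimpleGraph V) (hdeg : Degenerate D F) :
    m2LE F D ∧ (3 ≤ D → m2LT F D) :=
  m2_of_degenerate_general D hD F hdeg
end

section
/- Let H be a connected graph with maximum degree at most 3 (i.e. D+1 with D=2) and H ≠ K₄. Then m₂(H) ≤ 2. -/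
/-!
If a subgraph of `H` has `n` vertices and `m` edges, the degree sum gives `2m ≤ 3n` and
`2m ≤ n(n-1)`, while `d₂ ≤ 2` amounts to `m + 3 ≤ 2n`. The two bounds give this except for
`n = 4`, `m = 6`, that is a `K₄` inside `H`. Such a `K₄` uses up all three edges at each of its
vertices, so by connectivity it is all of `H`.
-/

open scoped Classical

open Finset

namespace SimpleGraph

variable {V : Type*} {G : SimpleGraph V}

lemma Preconnected.mem_of_adj_mem (hG : G.Preconnected) {s : Set V}
    (hs : ∀ ⦃a b⦄, G.Adj a b → a ∈ s → b ∈ s) {a : V} (ha : a ∈ s) (b : V) :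
    b ∈ s := by
  obtain ⟨p⟩ := hG a b
  by_contra hb
  obtain ⟨d, -, hd₁, hd₂⟩ := p.exists_boundary_dart s ha hb
  exact hd₂ (hs d.adj hd₁)

section Finite

variable [Fintype V] [DecidableRel G.Adj] {s : Finset V}

lemma neighborFinset_subset_erase [DecidableEq V]
    (hs : ∀ ⦃a b⦄, G.Adj a b → a ∈ s ∧ b ∈ s) (v : V) :
    G.neighborFinset v ⊆ s.erase v := fun w hw => by
  rw [mem_neighborFinset] at hw
  exact mem_erase.2 ⟨hw.ne', (hs hw).2⟩

lemma degree_le_card_sub_one [DecidableEq V]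
    (hs : ∀ ⦃a b⦄, G.Adj a b → a ∈ s ∧ b ∈ s) (v : V) (hv : v ∈ s) :
    G.degree v ≤ #s - 1 := by
  simpa [card_erase_of_mem hv] using card_le_card (neighborFinset_subset_erase hs v)

lemma sum_degree_eq_two_mul_card_edgeFinset
    (hs : ∀ ⦃a b⦄, G.Adj a b → a ∈ s ∧ b ∈ s) :
    ∑ v ∈ s, G.degree v = 2 * #G.edgeFinset := by
  rw [← sum_degrees_eq_twice_card_edges]
  refine sum_subset (subset_univ s) fun v _ hv => ?_
  rw [← card_neighborFinset_eq_degree, card_eq_zero, eq_empty_iff_forall_notMem]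
  exact fun w hw => hv (hs ((mem_neighborFinset _ _ _).1 hw)).1

lemma two_mul_card_edgeFinset_le (hs : ∀ ⦃a b⦄, G.Adj a b → a ∈ s ∧ b ∈ s) {k : ℕ}
    (hk : ∀ v ∈ s, G.degree v ≤ k) : 2 * #G.edgeFinset ≤ #s * k := by
  rw [← sum_degree_eq_two_mul_card_edgeFinset hs, ← smul_eq_mul, ← sum_const]
  exact sum_le_sum hk

lemma isClique_of_two_mul_card_edgeFinset_eq [DecidableEq V]
    (hs : ∀ ⦃a b⦄, G.Adj a b → a ∈ s ∧ b ∈ s)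
    (h : 2 * #G.edgeFinset = #s * (#s - 1)) : G.IsClique s := by
  have hdeg : ∀ v ∈ s, G.degree v = #s - 1 := by
    rw [← sum_eq_sum_iff_of_le (degree_le_card_sub_one hs), sum_const, smul_eq_mul,
      sum_degree_eq_two_mul_card_edgeFinset hs, h]
  intro v hv w hw hvw
  have hN : G.neighborFinset v = s.erase v :=
    eq_of_subset_of_card_le (neighborFinset_subset_erase hs v)
      (by rw [card_erase_of_mem hv, card_neighborFinset_eq_degree, hdeg v hv])
  rw [← mem_neighborFinset, hN]
  exact mem_erase.2 ⟨Ne.symm hvw, hw⟩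

lemma Connected.eq_univ_of_isClique [DecidableEq V] (hG : G.Connected) {k : ℕ}
    (hk : ∀ v, G.degree v ≤ k) (hs : G.IsClique (s : Set V)) (hcard : #s = k + 1) :
    s = univ := by
  have hN : ∀ v ∈ s, G.neighborFinset v = s.erase v := fun v hv =>
    (eq_of_subset_of_card_le (fun w hw => (mem_neighborFinset _ _ _).2 <|
        hs hv (mem_of_mem_erase hw) (ne_of_mem_erase hw).symm)
      (by rw [card_neighborFinset_eq_degree, card_erase_of_mem hv, hcard]; exact hk v)).symm
  obtain ⟨a, ha⟩ : s.Nonempty := card_pos.1 (by omega)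
  refine eq_univ_of_forall fun b => hG.preconnected.mem_of_adj_mem (s := (s : Set V)) ?_ ha b
  intro x y hxy hx
  have hy : y ∈ G.neighborFinset x := (mem_neighborFinset _ _ _).2 hxy
  rw [hN x hx] at hy
  exact mem_of_mem_erase hy

lemma Connected.cliqueFree_of_degree_le (hG : G.Connected) {k : ℕ} (hk : ∀ v, G.degree v ≤ k)
    (hK : IsEmpty (G ≃g completeGraph (Fin (k + 1)))) : G.CliqueFree (k + 1) := by
  intro s hs
  have huniv := hG.eq_univ_of_isClique hk hs.isClique hs.card_eq
  have htop : G = ⊤ := isClique_univ.1 (by simpa [huniv] using hs.isClique)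
  subst htop
  have hcard : Fintype.card V = k + 1 := by rw [← card_univ, ← huniv, hs.card_eq]
  exact hK.false (Iso.completeGraph (Fintype.equivFinOfCardEq hcard))

end Finite

end SimpleGraph

lemma d2val_le_two {n m : ℕ} (h : 1 ≤ m → 3 ≤ n → m + 3 ≤ 2 * n) : d2val n m ≤ 2 := by
  unfold d2val
  split_ifs with hmn
  · have hn : (3 : ℚ) ≤ n := by exact_mod_cast hmn.2
    rw [div_le_iff₀ (by linarith)]
    have hm : (m : ℚ) + 3 ≤ 2 * n := by exact_mod_cast h hmn.1 hmn.2
    linarith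
  · norm_num

lemma add_three_le_two_mul {n m : ℕ} (hn : 3 ≤ n) (h₃ : 2 * m ≤ n * 3)
    (hc : 2 * m ≤ n * (n - 1)) (h₄ : n = 4 → 2 * m ≠ n * (n - 1)) : m + 3 ≤ 2 * n := by
  obtain rfl | rfl | _ : n = 3 ∨ n = 4 ∨ 5 ≤ n := by omega
  all_goals omega

open SimpleGraph in
/-- A connected graph `H` with maximum degree at most `3` which is not (isomorphic to)
`K₄` satisfies `m₂(H) ≤ 2`. -/
theorem m2_maxdeg_three {V : Type*} [Fintype V] (H : SimpleGraph V)
    (hconn : H.Connected) (hdeg : ∀ v, (H.neighborSet v).ncard ≤ 3)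
    (hK4 : ¬ Nonempty (H ≃g SimpleGraph.completeGraph (Fin 4))) :
    m2LE H 2 := by
  intro s H' hle hs
  have hdegH : ∀ v, H.degree v ≤ 3 := fun v => by
    simpa [← card_neighborSet_eq_degree, Set.ncard_eq_toFinset_card'] using hdeg v
  have hdeg' : ∀ v ∈ s, H'.degree v ≤ 3 := fun v _ => (degree_le_of_le hle).trans (hdegH v)
  have hfree : H'.CliqueFree 4 :=
    (hconn.cliqueFree_of_degree_le hdegH (not_nonempty_iff.1 hK4)).anti hle
  rw [← coe_edgeFinset, Set.ncard_coe_finset]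
  refine d2val_le_two fun _ hn => add_three_le_two_mul hn
    (two_mul_card_edgeFinset_le hs hdeg')
    (two_mul_card_edgeFinset_le hs (degree_le_card_sub_one hs))
    fun h4 heq => hfree s ⟨isClique_of_two_mul_card_edgeFinset_eq hs heq, h4⟩
end

section
/- Let H be a connected graph with maximum degree exactly D+1, D ≥ 2, let Q be an induced cycle in H on ℓ ≥ 3 vertices all of whose vertices have degree at most D+1 in H, and let H⁺ be obtained from H by duplicating Q (adding a disjoint copy Q' of Q, joining each copy y' of y ∈ V(Q) to N_H(y)∖V(Q)). Then m₂(H⁺) ≤ max(m₂(H), D). -/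
open scoped Classical

/-- The graph `H⁺` obtained from `H` by duplicating the (induced) subgraph on `Q`:
a disjoint copy `Q'` of `Q` is added, with each copy `y'` of `y ∈ Q` joined to
`N_H(y) ∖ Q`, and with the edges of `H` induced on `Q` repeated inside `Q'`. -/
def dup {V : Type*} (H : SimpleGraph V) (Q : Finset V) :
    SimpleGraph (V ⊕ {y : V // y ∈ Q}) :=
  SimpleGraph.fromRel (fun a b =>
    match a, b with
    | Sum.inl a, Sum.inl b => H.Adj a b
    | Sum.inl a, Sum.inr y => H.Adj a y.1 ∧ a ∉ Q
    | Sum.inr y, Sum.inr z => H.Adj y.1 z.1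
    | _, _ => False)

/-! Take a subgraph of `H⁺` with vertex set `s` and `e` edges. If it uses no vertex of the original
copy of `Q`, folding `Q'` onto `Q` maps it injectively into `H`, so its 2-density is at most
`m₂(H)`. Otherwise split `s` into the part `s₁` outside `Q'` and the part `s₂` inside `Q'`. A vertex of `Q'` has two neighbours on
the cycle and at most `D - 1` outside `Q'`, so at most `D·|s₂|` edges meet `Q'`. If `|s₁| ≥ 2`,
this and `e(s₁) - 1 ≤ m₂(H)(|s₁| - 2)` give `e - 1 ≤ max(m₂(H), D)(|s| - 2)`. If `s₁` is a single
vertex, it lies in `Q`, so it has no neighbour in `Q'` and only the at most `|s₂| = |s| - 1` cycle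
edges remain. -/

open Finset SimpleGraph

lemma Sym2.map_injOn {α β : Type*} {f : α → β} {s : Set α} (hf : Set.InjOn f s) :
    Set.InjOn (Sym2.map f) {z | ∀ a ∈ z, a ∈ s} := by
  rintro ⟨a, b⟩ hab ⟨c, d⟩ hcd h
  simp only [Set.mem_ofPred_eq, Sym2.mem_iff, forall_eq_or_imp, forall_eq] at hab hcd
  simp only [Sym2.map_mk, Sym2.eq_iff] at h ⊢
  rcases h with ⟨h₁, h₂⟩ | ⟨h₁, h₂⟩
  · exact .inl ⟨hf hab.1 hcd.1 h₁, hf hab.2 hcd.2 h₂⟩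
  · exact .inr ⟨hf hab.1 hcd.2 h₁, hf hab.2 hcd.1 h₂⟩

lemma d2val_le {v e : ℕ} {M : ℚ} (hM : 1 / 2 ≤ M)
    (h : 1 ≤ e → 3 ≤ v → (e : ℚ) - 1 ≤ M * ((v : ℚ) - 2)) : d2val v e ≤ M := by
  unfold d2val
  split_ifs with hev
  · have hv : (3 : ℚ) ≤ v := by exact_mod_cast hev.2
    rw [div_le_iff₀ (by linarith)]
    exact h hev.1 hev.2
  · exact hM

lemma sub_one_le_of_d2val_le {v e : ℕ} {M : ℚ} (h : d2val v e ≤ M) (hM : 0 ≤ M)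
    (hv : 2 ≤ v) (he : e ≤ v.choose 2) : (e : ℚ) - 1 ≤ M * ((v : ℚ) - 2) := by
  obtain rfl | hv3 := hv.eq_or_lt
  · norm_num
    simpa using he
  have hv2 : (0 : ℚ) < v - 2 := by
    have : (3 : ℚ) ≤ v := by exact_mod_cast hv3
    linarith
  obtain rfl | he1 := Nat.eq_zero_or_pos e
  · have := mul_nonneg hM hv2.le
    push_cast
    linarith
  unfold d2val at h
  rwa [if_pos ⟨he1, hv3⟩, div_le_iff₀ hv2] at h

namespace SimpleGraph

variable {V W : Type*}

lemma forall_mem_of_mem_edgeSet {G : SimpleGraph V} {s : Finset V}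
    (hs : ∀ ⦃a b⦄, G.Adj a b → a ∈ s ∧ b ∈ s) {e : Sym2 V} (he : e ∈ G.edgeSet) :
    ∀ v ∈ e, v ∈ s := by
  induction e using Sym2.ind with
  | _ a b =>
    intro v hv
    rcases Sym2.mem_iff.1 hv with rfl | rfl
    exacts [(hs he).1, (hs he).2]

lemma ncard_edgeSet_le_choose_two {G : SimpleGraph V} {s : Finset V}
    (hs : ∀ ⦃a b⦄, G.Adj a b → a ∈ s ∧ b ∈ s) : G.edgeSet.ncard ≤ (#s).choose 2 := by
  rw [← Sym2.card_image_offDiag, ← Set.ncard_coe_finset]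
  refine Set.ncard_le_ncard ?_ (Finset.finite_toSet _)
  rintro ⟨a, b⟩ hab
  simp only [coe_image, coe_offDiag, Set.mem_image, Set.mem_offDiag, Prod.exists]
  exact ⟨a, b, ⟨(hs hab).1, (hs hab).2, hab.ne⟩, rfl⟩

lemma two_mul_ncard_edgeSet_le [Fintype V] {G : SimpleGraph V} {s : Finset V} {k : ℕ}
    (hs : ∀ ⦃a b⦄, G.Adj a b → a ∈ s ∧ b ∈ s) (hdeg : ∀ v, (G.neighborSet v).ncard ≤ k) :
    2 * G.edgeSet.ncard ≤ k * #s := by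
  have hout : ∀ v ∉ s, G.degree v = 0 := fun v hv ↦
    (G.degree_eq_zero_iff_notMem_support v).2 fun ⟨w, hvw⟩ ↦ hv (hs hvw).1
  rw [← coe_edgeFinset, Set.ncard_coe_finset, ← sum_degrees_eq_twice_card_edges,
    ← sum_subset (subset_univ s) fun v _ ↦ hout v, mul_comm]
  refine sum_le_card_nsmul _ _ _ fun v _ ↦ ?_
  rw [← card_neighborFinset_eq_degree, neighborFinset_def, ← Set.ncard_eq_toFinset_card']
  exact hdeg v

lemma ncard_edgeSet_sum [Finite V] [Finite W] (G : SimpleGraph (V ⊕ W)) :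
    G.edgeSet.ncard = (G.comap Sum.inl).edgeSet.ncard + (G.comap Sum.inr).edgeSet.ncard +
      {p : V × W | G.Adj (.inl p.1) (.inr p.2)}.ncard := by
  have hcross : Function.Injective fun p : V × W ↦ s(Sum.inl p.1, Sum.inr p.2) := by
    rintro ⟨a, b⟩ ⟨c, d⟩ h
    simpa [Sym2.eq_iff] using h
  have hsplit : G.edgeSet = Sym2.map Sum.inl '' (G.comap Sum.inl).edgeSet ∪
      Sym2.map Sum.inr '' (G.comap Sum.inr).edgeSet ∪
      (fun p : V × W ↦ s(Sum.inl p.1, Sum.inr p.2)) '' {p | G.Adj (.inl p.1) (.inr p.2)} := by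
    ext e
    induction e using Sym2.ind with
    | _ u w => cases u <;> cases w <;> simp [Sym2.exists, G.adj_comm, and_or_left, exists_or]
  rw [hsplit, Set.ncard_union_eq, Set.ncard_union_eq, Set.ncard_image_of_injective _
    (Sym2.map.injective Sum.inl_injective), Set.ncard_image_of_injective _
    (Sym2.map.injective Sum.inr_injective), Set.ncard_image_of_injective _ hcross]
  all_goals
    simp only [Set.disjoint_left, Set.mem_union, Set.mem_image, Sym2.exists]
    aesop (add simp Sym2.eq_iff)

end SimpleGraph

lemma m2LE.d2val_le_of_hom {V W : Type*} {G : SimpleGraph W} {H : SimpleGraph V} {x : ℚ}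
    (hx : m2LE H x) (φ : G →g H) {s : Finset W} {G' : SimpleGraph W} (hle : G' ≤ G)
    (hs : ∀ ⦃a b⦄, G'.Adj a b → a ∈ s ∧ b ∈ s) (hinj : Set.InjOn φ s) :
    d2val #s G'.edgeSet.ncard ≤ x := by
  let K := ((toSubgraph G' hle).map φ).spanningCoe
  have hK : K.edgeSet = Sym2.map φ '' G'.edgeSet := by
    rw [Subgraph.edgeSet_spanningCoe, Subgraph.edgeSet_map, ← Subgraph.edgeSet_spanningCoe]
    rfl
  have hKs : ∀ ⦃a b⦄, K.Adj a b → a ∈ s.image φ ∧ b ∈ s.image φ := by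
    rintro _ _ ⟨a, b, hab, rfl, rfl⟩
    exact ⟨mem_image_of_mem _ (hs hab).1, mem_image_of_mem _ (hs hab).2⟩
  have := hx (s.image φ) K (Subgraph.spanningCoe_le _) hKs
  rwa [card_image_of_injOn hinj, hK, Set.InjOn.ncard_image
    ((Sym2.map_injOn hinj).mono fun e he ↦ forall_mem_of_mem_edgeSet hs he)] at this

section dup

variable {V : Type*} {H : SimpleGraph V} {Q : Finset V}

@[simp] lemma dup_adj_inl_inl {a b : V} : (dup H Q).Adj (.inl a) (.inl b) ↔ H.Adj a b := by
  simpa [dup, H.adj_comm] using fun h ↦ h.ne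

@[simp] lemma dup_adj_inl_inr {a : V} {y : Q} :
    (dup H Q).Adj (.inl a) (.inr y) ↔ H.Adj a y ∧ a ∉ Q := by
  simp [dup]

@[simp] lemma dup_adj_inr_inl {a : V} {y : Q} :
    (dup H Q).Adj (.inr y) (.inl a) ↔ H.Adj a y ∧ a ∉ Q := by
  simp [dup]

@[simp] lemma dup_adj_inr_inr {y z : Q} : (dup H Q).Adj (.inr y) (.inr z) ↔ H.Adj y z := by
  simpa [dup, H.adj_comm] using fun h ↦ Subtype.coe_ne_coe.1 h.ne

variable (H Q) in
def dupFold : dup H Q →g H where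
  toFun := Sum.elim id Subtype.val
  map_rel' := by
    rintro (a | y) (b | z) h
    · exact dup_adj_inl_inl.1 h
    · exact (dup_adj_inl_inr.1 h).1
    · exact (dup_adj_inr_inl.1 h).1.symm
    · exact dup_adj_inr_inr.1 h

lemma dupFold_injOn : Set.InjOn (dupFold H Q) (Sum.inl '' (Q : Set V))ᶜ := by
  rintro (a | y) ha (b | z) hb h
  all_goals simp only [dupFold, RelHom.coeFn_mk, Sum.elim_inl, Sum.elim_inr, id] at h
  · rw [h]
  · exact absurd ⟨a, h ▸ z.2, rfl⟩ ha
  · exact absurd ⟨b, h ▸ y.2, rfl⟩ hb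
  · rw [Subtype.ext h]

variable {H' : SimpleGraph (V ⊕ Q)} {s : Finset (V ⊕ Q)}

lemma comap_inl_le_of_le_dup (hle : H' ≤ dup H Q) : H'.comap Sum.inl ≤ H :=
  fun _ _ h ↦ dup_adj_inl_inl.1 (hle h)

lemma adj_comap_inl_mem_toLeft (hs : ∀ ⦃a b⦄, H'.Adj a b → a ∈ s ∧ b ∈ s) ⦃a b : V⦄
    (h : (H'.comap Sum.inl).Adj a b) : a ∈ s.toLeft ∧ b ∈ s.toLeft :=
  ⟨mem_toLeft.2 (hs h).1, mem_toLeft.2 (hs h).2⟩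

lemma ncard_edgeSet_comap_inr_le (hle : H' ≤ dup H Q)
    (hs : ∀ ⦃a b⦄, H'.Adj a b → a ∈ s ∧ b ∈ s)
    (hQcycle : ∀ y ∈ Q, (H.neighborSet y ∩ Q).ncard = 2) :
    (H'.comap Sum.inr).edgeSet.ncard ≤ #s.toRight := by
  have hdeg : ∀ y, ((H'.comap Sum.inr).neighborSet y).ncard ≤ 2 := fun y ↦ by
    rw [← hQcycle y y.2]
    refine Set.ncard_le_ncard_of_injOn Subtype.val (fun z hz ↦ ⟨?_, z.2⟩)
      Subtype.val_injective.injOn (Q.finite_toSet.subset Set.inter_subset_right)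
    exact dup_adj_inr_inr.1 (hle hz)
  have := two_mul_ncard_edgeSet_le (s := s.toRight)
    (fun a b h ↦ ⟨mem_toRight.2 (hs h).1, mem_toRight.2 (hs h).2⟩) hdeg
  omega

lemma ncard_adj_inl_inr_add_one_le [Finite V] {D : ℕ} (hle : H' ≤ dup H Q)
    (hQdeg : ∀ y ∈ Q, (H.neighborSet y).ncard ≤ D + 1)
    (hQcycle : ∀ y ∈ Q, (H.neighborSet y ∩ Q).ncard = 2) (y : Q) :
    {a | H'.Adj (.inl a) (.inr y)}.ncard + 1 ≤ D := by
  have hsub : {a | H'.Adj (.inl a) (.inr y)} ⊆ H.neighborSet y \ Q := fun a h ↦ by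
    obtain ⟨hadj, haQ⟩ := dup_adj_inl_inr.1 (hle h)
    exact ⟨hadj.symm, haQ⟩
  have := Set.ncard_le_ncard hsub
  have := Set.ncard_inter_add_ncard_sdiff_eq_ncard (H.neighborSet y) Q
  have := hQcycle y y.2
  have := hQdeg y y.2
  omega

lemma ncard_adj_inl_inr_add_card_le [Finite V] {D : ℕ} (hle : H' ≤ dup H Q)
    (hs : ∀ ⦃a b⦄, H'.Adj a b → a ∈ s ∧ b ∈ s)
    (hQdeg : ∀ y ∈ Q, (H.neighborSet y).ncard ≤ D + 1)
    (hQcycle : ∀ y ∈ Q, (H.neighborSet y ∩ Q).ncard = 2) :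
    {p : V × Q | H'.Adj (.inl p.1) (.inr p.2)}.ncard + #s.toRight ≤ D * #s.toRight := by
  have hcover : {p : V × Q | H'.Adj (.inl p.1) (.inr p.2)} ⊆
      ⋃ y ∈ s.toRight, {a | H'.Adj (.inl a) (.inr y)} ×ˢ {y} := by
    rintro ⟨a, y⟩ h
    simp only [Set.mem_iUnion, Set.mem_prod, Set.mem_singleton_iff]
    exact ⟨y, mem_toRight.2 (hs h).2, h, rfl⟩
  calc _ ≤ ∑ y ∈ s.toRight, ({a | H'.Adj (.inl a) (.inr y)} ×ˢ {y}).ncard + #s.toRight :=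
        Nat.add_le_add_right ((Set.ncard_le_ncard hcover).trans (set_ncard_biUnion_le _ _)) _
    _ = ∑ y ∈ s.toRight, ({a | H'.Adj (.inl a) (.inr y)}.ncard + 1) := by
        simp [Set.ncard_prod, sum_add_distrib]
    _ ≤ ∑ _y ∈ s.toRight, D :=
        sum_le_sum fun y _ ↦ ncard_adj_inl_inr_add_one_le hle hQdeg hQcycle y
    _ = D * #s.toRight := by rw [sum_const, smul_eq_mul, mul_comm]

lemma ncard_edgeSet_le_of_le_dup [Finite V] {D : ℕ} (hle : H' ≤ dup H Q)
    (hs : ∀ ⦃a b⦄, H'.Adj a b → a ∈ s ∧ b ∈ s)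
    (hQdeg : ∀ y ∈ Q, (H.neighborSet y).ncard ≤ D + 1)
    (hQcycle : ∀ y ∈ Q, (H.neighborSet y ∩ Q).ncard = 2) :
    H'.edgeSet.ncard ≤ (H'.comap Sum.inl).edgeSet.ncard + D * #s.toRight := by
  have := ncard_edgeSet_sum H'
  have := ncard_edgeSet_comap_inr_le hle hs hQcycle
  have := ncard_adj_inl_inr_add_card_le hle hs hQdeg hQcycle
  omega

lemma ncard_edgeSet_le_of_le_dup_of_toLeft_eq_singleton [Finite V] {b : V}
    (hle : H' ≤ dup H Q) (hs : ∀ ⦃a b⦄, H'.Adj a b → a ∈ s ∧ b ∈ s)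
    (hQcycle : ∀ y ∈ Q, (H.neighborSet y ∩ Q).ncard = 2) (hsb : s.toLeft = {b}) (hbQ : b ∈ Q) :
    H'.edgeSet.ncard ≤ #s.toRight := by
  have hleft : (H'.comap Sum.inl).edgeSet.ncard = 0 := by
    simpa [hsb] using ncard_edgeSet_le_choose_two (adj_comap_inl_mem_toLeft hs)
  have hcross : {p : V × Q | H'.Adj (.inl p.1) (.inr p.2)} = ∅ := by
    refine Set.eq_empty_of_forall_notMem fun p h ↦ (dup_adj_inl_inr.1 (hle h)).2 ?_
    have := mem_toLeft.2 (hs h).1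
    rw [hsb, mem_singleton] at this
    exact this ▸ hbQ
  have hsplit := ncard_edgeSet_sum H'
  rw [hleft, hcross, Set.ncard_empty] at hsplit
  have := ncard_edgeSet_comap_inr_le hle hs hQcycle
  omega

lemma d2val_le_of_le_dup_of_inl_mem [Finite V] {D : ℕ} (hD : 2 ≤ D) {x : ℚ} (hx : m2LE H x)
    (hle : H' ≤ dup H Q) (hs : ∀ ⦃a b⦄, H'.Adj a b → a ∈ s ∧ b ∈ s)
    (hQdeg : ∀ y ∈ Q, (H.neighborSet y).ncard ≤ D + 1)
    (hQcycle : ∀ y ∈ Q, (H.neighborSet y ∩ Q).ncard = 2) {b : V} (hbQ : b ∈ Q)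
    (hbs : Sum.inl b ∈ s) :
    d2val #s H'.edgeSet.ncard ≤ max x D := by
  have hDM : (D : ℚ) ≤ max x D := le_max_right _ _
  have hD2 : (2 : ℚ) ≤ D := by exact_mod_cast hD
  have hcard : (#s : ℚ) = #s.toLeft + #s.toRight := by
    exact_mod_cast card_toLeft_add_card_toRight.symm
  have hb : b ∈ s.toLeft := mem_toLeft.2 hbs
  refine d2val_le (by linarith) fun _ hv ↦ ?_
  have hv : (3 : ℚ) ≤ #s := by exact_mod_cast hv
  obtain hone | htwo : #s.toLeft = 1 ∨ 2 ≤ #s.toLeft := by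
    have := card_pos.2 ⟨b, hb⟩
    omega
  · have hsb : s.toLeft = {b} :=
      eq_singleton_iff_unique_mem.2 ⟨hb, fun c hc ↦ card_le_one.1 hone.le c hc b hb⟩
    have he : (H'.edgeSet.ncard : ℚ) ≤ #s.toRight := by
      exact_mod_cast ncard_edgeSet_le_of_le_dup_of_toLeft_eq_singleton hle hs hQcycle hsb hbQ
    rw [hone, Nat.cast_one] at hcard
    nlinarith
  · have hleft := sub_one_le_of_d2val_le
      ((hx _ _ (comap_inl_le_of_le_dup hle) (adj_comap_inl_mem_toLeft hs)).trans (le_max_left _ _))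
      (by linarith) htwo (ncard_edgeSet_le_choose_two (adj_comap_inl_mem_toLeft hs))
    have he : (H'.edgeSet.ncard : ℚ) ≤ (H'.comap Sum.inl).edgeSet.ncard + D * #s.toRight := by
      exact_mod_cast ncard_edgeSet_le_of_le_dup hle hs hQdeg hQcycle
    have := mul_le_mul_of_nonneg_right hDM (Nat.cast_nonneg (α := ℚ) #s.toRight)
    nlinarith

end dup

theorem m2_dup_cycle_general {V : Type*} [Fintype V] (D : ℕ) (hD : 2 ≤ D)
    (H : SimpleGraph V)
    (Q : Finset V)
    (hQdeg : ∀ y ∈ Q, (H.neighborSet y).ncard ≤ D + 1)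
    (hQcycle : ∀ y ∈ Q, (H.neighborSet y ∩ ↑Q).ncard = 2)
    (x : ℚ) (hx : m2LE H x) :
    m2LE (dup H Q) (max x (D : ℚ)) := by
  intro s H' hle hs
  by_cases hQs : ∃ b ∈ Q, Sum.inl b ∈ s
  · obtain ⟨b, hbQ, hbs⟩ := hQs
    exact d2val_le_of_le_dup_of_inl_mem hD hx hle hs hQdeg hQcycle hbQ hbs
  · refine (hx.d2val_le_of_hom (dupFold H Q) hle hs (dupFold_injOn.mono ?_)).trans
      (le_max_left _ _)
    rintro _ hu ⟨b, hbQ, rfl⟩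
    exact hQs ⟨b, hbQ, hu⟩

/-- Duplicating an induced cycle `Q` (on `ℓ ≥ 3` vertices, all of degree at most `D+1`)
in a connected graph `H` of maximum degree exactly `D+1` (`D ≥ 2`) gives
`m₂(H⁺) ≤ max(m₂(H), D)`. -/
theorem m2_dup_cycle {V : Type*} [Fintype V] (D ℓ : ℕ) (hD : 2 ≤ D) (hℓ : 3 ≤ ℓ)
    (H : SimpleGraph V) (hconn : H.Connected)
    (hdeg : ∀ v, (H.neighborSet v).ncard ≤ D + 1)
    (hdegmax : ∃ v, (H.neighborSet v).ncard = D + 1)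
    (Q : Finset V) (hQcard : Q.card = ℓ)
    (hQdeg : ∀ y ∈ Q, (H.neighborSet y).ncard ≤ D + 1)
    (hQconn : (H.induce (↑Q : Set V)).Connected)
    (hQcycle : ∀ y ∈ Q, (H.neighborSet y ∩ ↑Q).ncard = 2)
    (x : ℚ) (hx : m2LE H x) :
    m2LE (dup H Q) (max x (D : ℚ)) :=
  m2_dup_cycle_general D hD H Q hQdeg hQcycle x hx
end
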